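/- Let ν = (n₁,…,n_k) be a tuple of positive integers and let ℓ be an integer with ℓ ≥ (1/2)·max{n₁+1,…,n_k+1,k}. Then the antisymmetric integer matrix B_{ν,ℓ} is equivalent to the block-diagonal matrix D_{2ℓk}(1, …, 1, n₁, …, n_k) consisting of k(ℓ−1) blocks K₁ followed by the blocks K_{n₁}, …, K_{n_k}. -/

import Mathlib

open Matrix

/-- Entry of the antisymmetric matrix `S_N` whose entries above the diagonal are all `1`
(indices are 0-based naturals). -/
def SmatE (p q : ℕ) : ℤ := if p < q then 1 else if q < p then -1 else 0

/-- The vector `v_{n,ℓ} ∈ ℤ^{2ℓ-1}` (0-based index `p`). -/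
def vvecE (n ℓ p : ℕ) : ℤ :=
  if p < n then (-1) ^ p
  else if p = 2 * ℓ - 2 ∧ Even n then 0
  else 1

/-- Entry of the 2ℓ×2ℓ block matrix `A_{n,ℓ} = [[S_{2ℓ-1}, v_{n,ℓ}], [-v_{n,ℓ}ᵀ, 0]]`
(0-based indices). -/
def AmatE (n ℓ p q : ℕ) : ℤ :=
  if p < 2 * ℓ - 1 then
    (if q < 2 * ℓ - 1 then SmatE p q else vvecE n ℓ p)
  else
    (if q < 2 * ℓ - 1 then -(vvecE n ℓ q) else 0)

/-- The antisymmetric 2ℓ×2ℓ integer matrix `A_{n,ℓ}`. -/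
def Amat (n ℓ : ℕ) : Matrix (Fin (2 * ℓ)) (Fin (2 * ℓ)) ℤ :=
  Matrix.of fun i j => AmatE n ℓ (i : ℕ) (j : ℕ)

/-- The antisymmetric `2ℓk × 2ℓk` matrix `B_{ν,ℓ}` for `ν = (ν 0, …, ν (k-1))`, defined
inductively: `B` for `k = 1` is `A_{ν 0, ℓ}`, and `B` for `k+1` is the block matrix
`[[B_k, C],[-Cᵀ, A_{ν k, ℓ}]]` where each column of `C` equals the `k`-th column
(1-based; 0-based index `k-1`) of `B_k`. -/
def Bmat (ℓ : ℕ) (ν : ℕ → ℕ) : (k : ℕ) → Matrix (Fin (2 * ℓ * k)) (Fin (2 * ℓ * k)) ℤ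
  | 0 => 0
  | k + 1 =>
    let B := Bmat ℓ ν k
    let C : Matrix (Fin (2 * ℓ * k)) (Fin (2 * ℓ)) ℤ :=
      Matrix.of fun i _ => if h : k - 1 < 2 * ℓ * k then B i ⟨k - 1, h⟩ else 0
    Matrix.reindex (finSumFinEquiv.trans (finCongr (by ring)))
      (finSumFinEquiv.trans (finCongr (by ring)))
      (Matrix.fromBlocks B C (-Cᵀ) (Amat (ν k) ℓ))

/-- The block-diagonal antisymmetric N×N matrix `D_N(n₁, …, n_k)` whose first diagonal
2×2 blocks are `K_{n₁}, …, K_{n_k}` (with `K_s = [[0,s],[-s,0]]`) and whose remaining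
entries vanish. -/
def Dmat (N : ℕ) (ns : List ℤ) : Matrix (Fin N) (Fin N) ℤ :=
  Matrix.of fun i j =>
    if (j : ℕ) = (i : ℕ) + 1 ∧ (i : ℕ) % 2 = 0 then ns.getD ((i : ℕ) / 2) 0
    else if (i : ℕ) = (j : ℕ) + 1 ∧ (j : ℕ) % 2 = 0 then -(ns.getD ((j : ℕ) / 2) 0)
    else 0

/-- Two integer matrices are equivalent if `B = T * A * Tᵀ` for some `T ∈ GL(N, ℤ)`. -/
def MatEquiv {n : Type*} [Fintype n] [DecidableEq n] (A B : Matrix n n ℤ) : Prop :=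
  ∃ T : Matrix n n ℤ, IsUnit T.det ∧ B = T * A * Tᵀ

/-!
In `B_{ν,ℓ} = [[B_{ν′,ℓ}, C], [-Cᵀ, A_{n_k,ℓ}]]` every column of `C` is column `k - 1` of the
antisymmetric matrix `B_{ν′,ℓ}`, so subtracting row `k - 1` from every row of the lower block row,
and column `k - 1` from every column of the right block column, clears `C` and `-Cᵀ`. Hence
`B_{ν,ℓ}` is congruent to `A_{n₁,ℓ} ⊕ ⋯ ⊕ A_{n_k,ℓ}`.

For `A = [[S_{2ℓ-1}, v], [-vᵀ, 0]]` with arbitrary `v`, the first two coordinates span a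
hyperbolic plane (`S₀₁ = 1`). Splitting it off leaves a matrix of the same shape and size `2ℓ - 2`,
with `v` replaced by `(v_{p+2} + v₀ - v₁)_p`; this step preserves the alternating sum
`∑ (-1)^p v_p`. Iterating gives `K₁ ⊕ ⋯ ⊕ K₁ ⊕ K_s` with `s` the alternating sum, and `s = n` for
`v = v_{n,ℓ}`. Finally, the `2 × 2` blocks of `D_N` can be permuted by a permutation congruence.
-/

namespace MatEquiv

variable {m n : Type*} [Fintype m] [DecidableEq m] [Fintype n] [DecidableEq n]

theorem of_eq {A B : Matrix n n ℤ} (h : A = B) : MatEquiv A B :=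
  ⟨1, by simp, by simp [h]⟩

theorem trans {A B C : Matrix n n ℤ} (h₁ : MatEquiv A B) (h₂ : MatEquiv B C) :
    MatEquiv A C := by
  obtain ⟨T, hT, rfl⟩ := h₁
  obtain ⟨S, hS, rfl⟩ := h₂
  refine ⟨S * T, by simpa [Matrix.det_mul] using hS.mul hT, ?_⟩
  simp only [Matrix.transpose_mul, Matrix.mul_assoc]

theorem reindex (e : m ≃ n) {A B : Matrix m m ℤ} (h : MatEquiv A B) :
    MatEquiv (Matrix.reindex e e A) (Matrix.reindex e e B) := by
  obtain ⟨T, hT, rfl⟩ := h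
  refine ⟨Matrix.reindex e e T, by rwa [Matrix.det_reindex_self], ?_⟩
  simp only [Matrix.reindex_apply, Matrix.transpose_submatrix, Matrix.submatrix_mul_equiv]

theorem fromBlocks {A A' : Matrix m m ℤ} {B B' : Matrix n n ℤ} (hA : MatEquiv A A')
    (hB : MatEquiv B B') :
    MatEquiv (Matrix.fromBlocks A 0 0 B) (Matrix.fromBlocks A' 0 0 B') := by
  obtain ⟨T, hT, rfl⟩ := hA
  obtain ⟨S, hS, rfl⟩ := hB
  refine ⟨Matrix.fromBlocks T 0 0 S, by simpa using hT.mul hS, ?_⟩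
  simp [Matrix.fromBlocks_transpose, Matrix.fromBlocks_multiply]

theorem submatrix_perm (A : Matrix n n ℤ) (σ : Equiv.Perm n) :
    MatEquiv A (A.submatrix σ σ) := by
  refine ⟨σ.permMatrix ℤ, by simp, ?_⟩
  rw [Matrix.transpose_permMatrix, Equiv.Perm.permMatrix, Equiv.Perm.permMatrix,
    PEquiv.toMatrix_toPEquiv_mul, PEquiv.mul_toMatrix_toPEquiv]
  rfl

end MatEquiv

theorem matEquiv_fromBlocks_schur {m n : Type*} [Fintype m] [DecidableEq m] [Fintype n]
    [DecidableEq n] (B : Matrix m m ℤ) (Y : Matrix m n ℤ) (A : Matrix n n ℤ) (hB : Bᵀ = -B) :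
    MatEquiv (Matrix.fromBlocks B (B * Y) (-(B * Y)ᵀ) A)
      (Matrix.fromBlocks B 0 0 (A - Yᵀ * B * Y)) := by
  refine ⟨Matrix.fromBlocks 1 0 (-Yᵀ) 1, by simp, ?_⟩
  simp only [Matrix.fromBlocks_transpose, Matrix.fromBlocks_multiply, Matrix.transpose_mul, hB,
    Matrix.transpose_one, Matrix.transpose_zero, Matrix.transpose_neg, Matrix.transpose_transpose]
  congr 1 <;> simp [Matrix.mul_assoc, sub_eq_neg_add]

theorem matEquiv_fromBlocks_column {m n : Type*} [Fintype m] [DecidableEq m] [Fintype n]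
    [DecidableEq n] (B : Matrix m m ℤ) (hB : Bᵀ = -B) (i₀ : m) (A : Matrix n n ℤ) :
    MatEquiv (Matrix.fromBlocks B (Matrix.of fun i _ => B i i₀)
        (-(Matrix.of fun i (_ : n) => B i i₀)ᵀ) A)
      (Matrix.fromBlocks B 0 0 A) := by
  set Y : Matrix m n ℤ := Matrix.of fun i _ => if i = i₀ then 1 else 0
  have hBY : B * Y = Matrix.of fun i _ => B i i₀ := by
    ext i j
    simp [Y, Matrix.mul_apply]
  have hdiag : B i₀ i₀ = 0 := by
    have := congrFun (congrFun hB i₀) i₀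
    simp only [Matrix.transpose_apply, Matrix.neg_apply] at this
    omega
  have hYBY : Yᵀ * B * Y = 0 := by
    ext i j
    simp [Y, Matrix.mul_apply, hdiag]
  simpa [hBY, hYBY] using matEquiv_fromBlocks_schur B Y A hB

theorem reindex_fromBlocks_dmat {N M K : ℕ} (L₁ L₂ : List ℤ) (hL : 2 * L₁.length = N)
    (h : N + M = K) :
    Matrix.reindex (finSumFinEquiv.trans (finCongr h)) (finSumFinEquiv.trans (finCongr h))
      (Matrix.fromBlocks (Dmat N L₁) 0 0 (Dmat M L₂)) = Dmat K (L₁ ++ L₂) := by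
  subst hL h
  rw [← Equiv.eq_symm_apply, Matrix.reindex_symm]
  have hget (a : ℕ) : (L₁ ++ L₂).getD ((2 * L₁.length + a) / 2) 0 = L₂.getD (a / 2) 0 := by
    rw [List.getD_append_right _ _ _ _ (by omega)]
    congr 1
    omega
  ext (i | i) (j | j) <;>
    simp only [Dmat, Matrix.reindex_apply, Matrix.submatrix_apply, Matrix.of_apply,
      Equiv.symm_symm, Equiv.trans_apply, finSumFinEquiv_apply_left, finSumFinEquiv_apply_right,
      finCongr_apply, Fin.val_cast, Fin.val_castAdd, Fin.val_natAdd, Matrix.fromBlocks_apply₁₁,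
      Matrix.fromBlocks_apply₁₂, Matrix.fromBlocks_apply₂₁, Matrix.fromBlocks_apply₂₂,
      Matrix.zero_apply] <;>
    have := i.isLt <;> have := j.isLt <;> split_ifs <;>
    first | rfl | omega | rw [List.getD_append _ _ _ _ (by omega)] | rw [hget]

theorem dmat_four_matEquiv_swap (a b : ℤ) : MatEquiv (Dmat 4 [a, b]) (Dmat 4 [b, a]) := by
  convert MatEquiv.submatrix_perm (Dmat 4 [a, b]) (finRotate 4 ^ 2)
  ext i j
  fin_cases i <;> fin_cases j <;> rfl

theorem dmat_matEquiv_of_perm {L L' : List ℤ} (h : L.Perm L') {N : ℕ} (hN : 2 * L.length ≤ N) :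
    MatEquiv (Dmat N L) (Dmat N L') := by
  induction h generalizing N with
  | nil => exact .of_eq rfl
  | @cons x l₁ l₂ _ ih =>
    simp only [List.length_cons] at hN
    have hN' : 2 + (N - 2) = N := by omega
    exact (MatEquiv.of_eq (reindex_fromBlocks_dmat [x] l₁ rfl hN').symm).trans
      ((((MatEquiv.of_eq rfl).fromBlocks (ih (by omega))).reindex _).trans
        (.of_eq (reindex_fromBlocks_dmat [x] l₂ rfl hN')))
  | swap x y l =>
    simp only [List.length_cons] at hN
    have hN' : 4 + (N - 4) = N := by omega
    exact (MatEquiv.of_eq (reindex_fromBlocks_dmat [y, x] l rfl hN').symm).trans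
      ((((dmat_four_matEquiv_swap y x).fromBlocks (.of_eq rfl)).reindex _).trans
        (.of_eq (reindex_fromBlocks_dmat [x, y] l rfl hN')))
  | trans h₁ _ ih₁ ih₂ => exact (ih₁ hN).trans (ih₂ (h₁.length_eq ▸ hN))

theorem dmat_two (a : ℤ) : Dmat 2 [a] = !![0, a; -a, 0] := by
  ext i j
  fin_cases i <;> fin_cases j <;> rfl

theorem matEquiv_split_hyperbolic_plane {n : Type*} [Fintype n] [DecidableEq n]
    (M : Matrix (Fin 2 ⊕ n) (Fin 2 ⊕ n) ℤ) (hM : Mᵀ = -M)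
    (h₁₁ : M.toBlocks₁₁ = !![0, 1; -1, 0]) :
    MatEquiv M (Matrix.fromBlocks !![0, 1; -1, 0] 0 0
      (M.toBlocks₂₂ - M.toBlocks₁₂ᵀ * !![0, 1; -1, 0] * M.toBlocks₁₂)) := by
  set K : Matrix (Fin 2) (Fin 2) ℤ := !![0, 1; -1, 0]
  set C := M.toBlocks₁₂
  have hKK : K * K = -1 := by
    ext a b; fin_cases a <;> fin_cases b <;> rfl
  have hKt : Kᵀ = -K := by
    ext a b; fin_cases a <;> fin_cases b <;> rfl
  have h₂₁ : M.toBlocks₂₁ = -Cᵀ := by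
    ext i j
    exact congrFun (congrFun hM (.inl j)) (.inr i)
  have hblocks : M = Matrix.fromBlocks K (K * (-K * C)) (-(K * (-K * C))ᵀ) M.toBlocks₂₂ := by
    rw [← Matrix.mul_assoc, Matrix.mul_neg, hKK, neg_neg, Matrix.one_mul, ← h₁₁, ← h₂₁,
      Matrix.fromBlocks_toBlocks]
  have hschur : (-K * C)ᵀ * K * (-K * C) = Cᵀ * K * C := by
    simp only [Matrix.transpose_mul, Matrix.transpose_neg, hKt, neg_neg, Matrix.neg_mul,
      Matrix.mul_neg, Matrix.mul_assoc]
    rw [← Matrix.mul_assoc K K, hKK]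
    simp
  rw [← hschur]
  conv_lhs => rw [hblocks]
  exact matEquiv_fromBlocks_schur K (-K * C) _ hKt

def AmatGen (ℓ : ℕ) (v : ℕ → ℤ) : Matrix (Fin (2 * ℓ)) (Fin (2 * ℓ)) ℤ :=
  Matrix.of fun i j =>
    if (i : ℕ) < 2 * ℓ - 1 then (if (j : ℕ) < 2 * ℓ - 1 then SmatE i j else v i)
    else (if (j : ℕ) < 2 * ℓ - 1 then -v j else 0)

theorem amat_eq_amatGen (n ℓ : ℕ) : Amat n ℓ = AmatGen ℓ (vvecE n ℓ) := rfl

theorem amatGen_transpose (ℓ : ℕ) (v : ℕ → ℤ) : (AmatGen ℓ v)ᵀ = -AmatGen ℓ v := by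
  ext i j
  simp only [AmatGen, SmatE, Matrix.transpose_apply, Matrix.neg_apply, Matrix.of_apply]
  split_ifs <;> omega

def vshift (v : ℕ → ℤ) (p : ℕ) : ℤ := v (p + 2) + v 0 - v 1

theorem amatGen_succ_matEquiv {ℓ : ℕ} (hℓ : 1 ≤ ℓ) (v : ℕ → ℤ) :
    MatEquiv (AmatGen (ℓ + 1) v)
      (Matrix.reindex (finSumFinEquiv.trans (finCongr (by omega)))
        (finSumFinEquiv.trans (finCongr (by omega)))
        (Matrix.fromBlocks !![0, 1; -1, 0] 0 0 (AmatGen ℓ (vshift v)))) := by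
  set e : Fin 2 ⊕ Fin (2 * ℓ) ≃ Fin (2 * (ℓ + 1)) := finSumFinEquiv.trans (finCongr (by omega))
  set M := (AmatGen (ℓ + 1) v).submatrix e e
  have he₁ (a : Fin 2) : (e (.inl a) : ℕ) = a := rfl
  have he₂ (p : Fin (2 * ℓ)) : (e (.inr p) : ℕ) = 2 + p := rfl
  have hM : Mᵀ = -M := by
    rw [Matrix.transpose_submatrix, amatGen_transpose]
    rfl
  have h₁₁ : M.toBlocks₁₁ = !![0, 1; -1, 0] := by
    ext a b
    simp only [M, Matrix.toBlocks₁₁, Matrix.submatrix_apply, AmatGen, SmatE, Matrix.of_apply, he₁]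
    fin_cases a <;> fin_cases b <;> simp <;> omega
  have h₁₂ (a : Fin 2) (p : Fin (2 * ℓ)) :
      M.toBlocks₁₂ a p = if (p : ℕ) < 2 * ℓ - 1 then 1 else v a := by
    simp only [M, Matrix.toBlocks₁₂, Matrix.submatrix_apply, AmatGen, SmatE, Matrix.of_apply,
      he₁, he₂]
    split_ifs <;> omega
  have h₂₂ : M.toBlocks₂₂ - M.toBlocks₁₂ᵀ * !![0, 1; -1, 0] * M.toBlocks₁₂
      = AmatGen ℓ (vshift v) := by
    ext p q
    simp only [Matrix.sub_apply, Matrix.mul_apply, Fin.sum_univ_two, Matrix.transpose_apply, h₁₂,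
      Matrix.of_apply, Matrix.cons_val_zero, Matrix.cons_val_one, Fin.val_zero, Fin.val_one]
    simp only [M, Matrix.toBlocks₂₂, Matrix.submatrix_apply, AmatGen, SmatE, vshift,
      Matrix.of_apply, he₂, Nat.add_comm 2]
    split_ifs <;> first | omega | ring
  have hA : AmatGen (ℓ + 1) v = Matrix.reindex e e M := by simp [M]
  rw [hA, ← h₂₂]
  exact (matEquiv_split_hyperbolic_plane M hM h₁₁).reindex e

def altSum (ℓ : ℕ) (v : ℕ → ℤ) : ℤ := ∑ p ∈ Finset.range (2 * ℓ - 1), (-1) ^ p * v p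

theorem altSum_vshift {ℓ : ℕ} (hℓ : 1 ≤ ℓ) (v : ℕ → ℤ) :
    altSum ℓ (vshift v) = altSum (ℓ + 1) v := by
  have hodd : ∑ p ∈ Finset.range (2 * ℓ - 1), (-1 : ℤ) ^ p = 1 := by
    rw [neg_one_geom_sum, if_neg (Nat.not_even_iff_odd.mpr ⟨ℓ - 1, by omega⟩)]
  unfold altSum vshift
  rw [show 2 * (ℓ + 1) - 1 = 2 * ℓ - 1 + 1 + 1 by omega, Finset.sum_range_succ',
    Finset.sum_range_succ']
  simp only [mul_add, mul_sub, Finset.sum_add_distrib, Finset.sum_sub_distrib, ← Finset.sum_mul,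
    hodd, pow_succ, mul_neg, neg_mul, mul_one, neg_neg, add_assoc, Nat.reduceAdd]
  ring

theorem amatGen_matEquiv_dmat {ℓ : ℕ} (hℓ : 1 ≤ ℓ) (v : ℕ → ℤ) :
    MatEquiv (AmatGen ℓ v) (Dmat (2 * ℓ) (List.replicate (ℓ - 1) 1 ++ [altSum ℓ v])) := by
  induction ℓ, hℓ using Nat.le_induction generalizing v with
  | base =>
    refine .of_eq ?_
    rw [List.replicate_zero, List.nil_append, dmat_two]
    ext i j
    fin_cases i <;> fin_cases j <;> simp [AmatGen, SmatE, altSum]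
  | succ ℓ hℓ ih =>
    refine (amatGen_succ_matEquiv hℓ v).trans
      ((((MatEquiv.of_eq rfl).fromBlocks (ih (vshift v))).reindex _).trans (.of_eq ?_))
    rw [← dmat_two, reindex_fromBlocks_dmat (N := 2) [1] _ rfl, altSum_vshift hℓ,
      ← List.append_assoc]
    congr 2
    rw [List.singleton_append, ← List.replicate_succ, Nat.add_sub_cancel, Nat.sub_add_cancel hℓ]

theorem sum_Ico_neg_one_pow_of_even {a b : ℕ} (h : Even (b - a)) :
    ∑ p ∈ Finset.Ico a b, (-1 : ℤ) ^ p = 0 := by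
  rw [Finset.sum_Ico_eq_sum_range]
  simp only [pow_add, ← Finset.mul_sum, neg_one_geom_sum, if_pos h, mul_zero]

theorem altSum_vvecE {n ℓ : ℕ} (hn : 0 < n) (hnℓ : n + 1 ≤ 2 * ℓ) :
    altSum ℓ (vvecE n ℓ) = n := by
  unfold altSum
  rw [← Finset.sum_range_add_sum_Ico _ (show n ≤ 2 * ℓ - 1 by omega)]
  have hhead : ∑ p ∈ Finset.range n, (-1 : ℤ) ^ p * vvecE n ℓ p = n := by
    rw [Finset.sum_congr rfl fun p hp => by
      rw [vvecE, if_pos (Finset.mem_range.mp hp), ← pow_add, Even.neg_one_pow ⟨p, rfl⟩]]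
    simp
  have htail_of {m : ℕ} (hlast : m < 2 * ℓ - 1 ∨ ¬ Even n) (hev : Even (m - n)) :
      ∑ p ∈ Finset.Ico n m, (-1 : ℤ) ^ p * vvecE n ℓ p = 0 := by
    rw [← sum_Ico_neg_one_pow_of_even hev]
    refine Finset.sum_congr rfl fun p hp => ?_
    rw [Finset.mem_Ico] at hp
    rw [vvecE, if_neg (by omega), if_neg fun h => hlast.elim (fun _ => by omega) (· h.2), mul_one]
  have htail : ∑ p ∈ Finset.Ico n (2 * ℓ - 1), (-1 : ℤ) ^ p * vvecE n ℓ p = 0 := by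
    rcases Nat.even_or_odd n with ⟨t, rfl⟩ | ⟨t, rfl⟩
    · rw [show 2 * ℓ - 1 = 2 * ℓ - 2 + 1 by omega, Finset.sum_Ico_succ_top (by omega),
        vvecE, if_neg (by omega), if_pos ⟨rfl, ⟨t, rfl⟩⟩, mul_zero, add_zero]
      exact htail_of (.inl (by omega)) ⟨ℓ - 1 - t, by omega⟩
    · exact htail_of (.inr (by simp)) ⟨ℓ - 1 - t, by omega⟩
  rw [hhead, htail, add_zero]

theorem amat_matEquiv_dmat {n ℓ : ℕ} (hn : 0 < n) (hnℓ : n + 1 ≤ 2 * ℓ) :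
    MatEquiv (Amat n ℓ) (Dmat (2 * ℓ) (List.replicate (ℓ - 1) 1 ++ [(n : ℤ)])) := by
  rw [amat_eq_amatGen, ← altSum_vvecE hn hnℓ]
  exact amatGen_matEquiv_dmat (by omega) _

theorem transpose_fromBlocks_of_transpose_eq_neg {m n : Type*} {B : Matrix m m ℤ}
    {A : Matrix n n ℤ} {C : Matrix m n ℤ} (hB : Bᵀ = -B) (hA : Aᵀ = -A) :
    (Matrix.fromBlocks B C (-Cᵀ) A)ᵀ = -Matrix.fromBlocks B C (-Cᵀ) A := by
  rw [Matrix.fromBlocks_transpose, Matrix.fromBlocks_neg, hB, hA, Matrix.transpose_neg,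
    Matrix.transpose_transpose, neg_neg]

theorem amat_transpose (n ℓ : ℕ) : (Amat n ℓ)ᵀ = -Amat n ℓ := amatGen_transpose ℓ _

theorem bmat_transpose (ℓ : ℕ) (ν : ℕ → ℕ) (k : ℕ) : (Bmat ℓ ν k)ᵀ = -Bmat ℓ ν k := by
  induction k with
  | zero => simp [Bmat]
  | succ k ih =>
    rw [Bmat, Matrix.transpose_reindex, transpose_fromBlocks_of_transpose_eq_neg ih
      (amat_transpose _ _)]
    rfl

theorem bmat_succ_matEquiv (ℓ : ℕ) (ν : ℕ → ℕ) (k : ℕ) :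
    MatEquiv (Bmat ℓ ν (k + 1))
      (Matrix.reindex (finSumFinEquiv.trans (finCongr (by ring)))
        (finSumFinEquiv.trans (finCongr (by ring)))
        (Matrix.fromBlocks (Bmat ℓ ν k) 0 0 (Amat (ν k) ℓ))) := by
  simp only [Bmat]
  refine .reindex _ ?_
  by_cases hk : k - 1 < 2 * ℓ * k
  · simp only [dif_pos hk]
    exact matEquiv_fromBlocks_column _ (bmat_transpose ℓ ν k) _ _
  · simp only [dif_neg hk]
    exact .of_eq rfl

theorem Bmat_equiv_Dmat_general (k ℓ : ℕ) (ν : ℕ → ℕ)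
    (hν : ∀ i < k, 0 < ν i) (hℓ : ∀ i < k, ν i + 1 ≤ 2 * ℓ) :
    MatEquiv (Bmat ℓ ν k)
      (Dmat (2 * ℓ * k)
        (List.replicate (k * (ℓ - 1)) (1 : ℤ) ++ (List.range k).map fun i => (ν i : ℤ))) := by
  induction k with
  | zero => exact .of_eq (by ext i; exact absurd i.isLt (by simp))
  | succ k ih =>
    obtain ⟨ℓ, rfl⟩ : ∃ ℓ', ℓ = ℓ' + 1 := ⟨ℓ - 1, by have := hℓ k (by omega); omega⟩
    have hlen : 2 * (List.replicate (k * ℓ) (1 : ℤ) ++ (List.range k).map fun i => (ν i : ℤ)).length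
        = 2 * (ℓ + 1) * k := by
      simp only [List.length_append, List.length_replicate, List.length_map, List.length_range]
      ring
    refine (bmat_succ_matEquiv _ ν k).trans <| (((ih (fun i hi => hν i (by omega))
      (fun i hi => hℓ i (by omega))).fromBlocks
      (amat_matEquiv_dmat (hν k (by omega)) (hℓ k (by omega)))).reindex _).trans ?_
    simp only [Nat.add_sub_cancel]
    rw [reindex_fromBlocks_dmat _ _ hlen]
    refine dmat_matEquiv_of_perm ?_ ?_
    · rw [List.range_succ, List.map_append, List.map_singleton, Nat.succ_mul, List.replicate_add]
      simpa only [List.append_assoc] using (List.perm_append_comm.append_right _).append_left _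
    · simp only [List.length_append, List.length_replicate, List.length_map, List.length_range,
        List.length_singleton]
      exact le_of_eq (by ring)

/-- for ν = (n₁,…,n_k) positive and 2ℓ ≥ max{n₁+1,…,n_k+1,k}, the matrix
`B_{ν,ℓ}` is equivalent to `D_{2ℓk}(1,…,1,n₁,…,n_k)` with `k(ℓ-1)` blocks `K₁` followed
by the blocks `K_{n₁},…,K_{n_k}`. -/
theorem Bmat_equiv_Dmat (k ℓ : ℕ) (ν : ℕ → ℕ) (hk : 0 < k)
    (hν : ∀ i < k, 0 < ν i) (hℓ : ∀ i < k, ν i + 1 ≤ 2 * ℓ) (hkℓ : k ≤ 2 * ℓ) :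
    MatEquiv (Bmat ℓ ν k)
      (Dmat (2 * ℓ * k)
        (List.replicate (k * (ℓ - 1)) (1 : ℤ) ++ (List.range k).map fun i => (ν i : ℤ))) :=
  Bmat_equiv_Dmat_general k ℓ ν hν hℓ
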